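/- Suppose f : ℝ^d → ℝ satisfies |f(x)| ≤ C·exp(−β‖x‖_p^q) with C = ‖f‖_{0,β,p,q} and define f̃(x) = ∑_{k ∈ ℤ^d} f(x + 2a·k) on [−a,a]^d. Then for any a ≥ β^{−1/q}, ∫_{[−a,a]^d} |f(x) − f̃(x)|^2 dx ≤ C_{d,q}^2 · C^2 · (2a)^d · exp(−2βa^q). -/

import Mathlib

open scoped ENNReal
open MeasureTheory

/-- The constant `C_{d,q} = ∑_{w=1}^∞ ((2w+1)^d − (2w−1)^d) e^{−((2w−1)^q − 1)}`. -/
noncomputable def Cdq (d : ℕ) (q : ℝ) : ℝ :=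
  ∑' w : ℕ, ((2 * ((w : ℝ) + 1) + 1) ^ d - (2 * ((w : ℝ) + 1) - 1) ^ d) *
    Real.exp (-((2 * ((w : ℝ) + 1) - 1) ^ q - 1))

/-- The `ℓ_p` norm on `ℝ^d`, `1 ≤ p ≤ ∞`, via the `PiLp` norm. -/
noncomputable def pnorm (d : ℕ) (p : ℝ≥0∞) (x : Fin d → ℝ) : ℝ :=
  ‖(WithLp.equiv p (Fin d → ℝ)).symm x‖

/-!
If `x ∈ [-a,a]^d` and `k ∈ ℤ^d` has sup norm `m ≥ 1`, some coordinate of `x + 2ak` has absolute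
value at least `a(2m-1)`, hence so has its `ℓ_p` norm. Since `βa^q ≥ 1` and `(2m-1)^q ≥ 1`, the
decay of `f` then gives `|f(x + 2ak)| ≤ C e^{-βa^q} e^{-((2m-1)^q-1)}`. The sphere of radius `m`
in the sup norm contains `(2m+1)^d - (2m-1)^d` lattice points, so summing over `k ≠ 0` yields
`|f x - f̃ x| ≤ C_{d,q} C e^{-βa^q}` on the cube, and integrating the square of this bound over
the cube of volume `(2a)^d` gives the claim.
-/

open Finset Real

section LatticeBoxes

variable {ι : Type*} [Fintype ι]

def supNatAbs (k : ι → ℤ) : ℕ := univ.sup fun i => (k i).natAbs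

lemma supNatAbs_eq_zero {k : ι → ℤ} : supNatAbs k = 0 ↔ k = 0 := by
  simp [supNatAbs, funext_iff]

lemma exists_natAbs_eq_supNatAbs {k : ι → ℤ} (hk : k ≠ 0) : ∃ i, (k i).natAbs = supNatAbs k := by
  obtain ⟨j, -⟩ := Function.ne_iff.1 hk
  obtain ⟨i, -, hi⟩ := exists_mem_eq_sup univ ⟨j, mem_univ j⟩ fun i => (k i).natAbs
  exact ⟨i, hi.symm⟩

noncomputable def cdqWeight (q : ℝ) (k : ι → ℤ) : ℝ :=
  if k = 0 then 0 else exp (-((2 * (supNatAbs k : ℝ) - 1) ^ q - 1))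

lemma cdqWeight_nonneg (q : ℝ) : 0 ≤ cdqWeight (ι := ι) q := fun k => by
  unfold cdqWeight; split_ifs <;> positivity

variable [DecidableEq ι]

lemma mem_box_iff_supNatAbs_eq {k : ι → ℤ} {n : ℕ} : k ∈ box n ↔ supNatAbs k = n := by
  cases n with
  | zero => rw [box_zero, mem_singleton, supNatAbs_eq_zero]
  | succ n =>
    simp only [box_succ_eq_sdiff, mem_sdiff, mem_Icc, Pi.le_def, supNatAbs, le_antisymm_iff,
      Finset.sup_le_iff, Finset.le_sup_iff n.succ_pos, mem_univ, true_and, true_implies,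
      ← forall_and, Pi.neg_apply, Pi.natCast_apply, not_forall, Nat.succ_eq_add_one]
    refine and_congr (forall_congr' fun i => ?_) (exists_congr fun i => ?_) <;> omega

lemma card_box_succ_pi (n : ℕ) :
    (#(box (n + 1) : Finset (ι → ℤ)) : ℝ) =
      (2 * ((n : ℝ) + 1) + 1) ^ Fintype.card ι - (2 * ((n : ℝ) + 1) - 1) ^ Fintype.card ι := by
  have hsub : Icc (-n : ι → ℤ) n ⊆ Icc (-(n + 1 : ℕ)) (n + 1 : ℕ) :=
    Icc_subset_Icc (by simp) (by simp)
  rw [box_succ_eq_sdiff, card_sdiff_of_subset hsub, Nat.cast_sub (card_le_card hsub)]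
  simp only [Pi.card_Icc, Pi.neg_apply, Pi.natCast_apply, Int.card_Icc, prod_const, card_univ]
  push_cast
  rw [show ((n : ℤ) + 1 + 1 - -((n : ℤ) + 1)).toNat = 2 * n + 3 by omega,
    show ((n : ℤ) + 1 - -(n : ℤ)).toNat = 2 * n + 1 by omega]
  push_cast
  ring

lemma hasSum_sum_box {g : (ι → ℤ) → ℝ} (hg : 0 ≤ g)
    (hs : Summable fun n : ℕ => ∑ k ∈ box n, g k) : HasSum g (∑' n, ∑ k ∈ box n, g k) := by
  have hpart : ∀ k : ι → ℤ, ∃! n : ℕ, k ∈ ((box n : Finset (ι → ℤ)) : Set (ι → ℤ)) := by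
    simp only [mem_coe, mem_box_iff_supNatAbs_eq, existsUnique_eq', implies_true]
  have hsum : Summable g := by
    refine (summable_partition hg hpart).2 ⟨fun n => .of_finite, ?_⟩
    simpa only [Finset.tsum_subtype'] using hs
  have hboxes : HasSum (fun n => ∑ k ∈ box n, g k) (∑' k, g k) :=
    ((Set.sigmaEquiv _ hpart).hasSum_iff.2 hsum.hasSum).sigma fun n => (box n).hasSum g
  rw [hboxes.tsum_eq]
  exact hsum.hasSum

lemma sum_box_succ_cdqWeight (q : ℝ) (n : ℕ) :
    ∑ k ∈ box (n + 1), cdqWeight (ι := ι) q k =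
      ((2 * ((n : ℝ) + 1) + 1) ^ Fintype.card ι - (2 * ((n : ℝ) + 1) - 1) ^ Fintype.card ι) *
        exp (-((2 * ((n : ℝ) + 1) - 1) ^ q - 1)) := by
  rw [← card_box_succ_pi, ← nsmul_eq_mul, ← sum_const]
  refine sum_congr rfl fun k hk => ?_
  rw [mem_box_iff_supNatAbs_eq] at hk
  have hk0 : k ≠ 0 := fun h => by simp [supNatAbs_eq_zero.2 h] at hk
  simp [cdqWeight, hk0, hk]

lemma summable_cdq_term (d : ℕ) {q : ℝ} (hq : 1 ≤ q) :
    Summable fun w : ℕ => ((2 * ((w : ℝ) + 1) + 1) ^ d - (2 * ((w : ℝ) + 1) - 1) ^ d) *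
      exp (-((2 * ((w : ℝ) + 1) - 1) ^ q - 1)) := by
  have hpoly : Summable fun w : ℕ => ((w : ℝ) + 1) ^ d * exp (-2 * ((w : ℝ) + 1)) := by
    simpa using (summable_nat_add_iff 1).2 (summable_pow_mul_exp_neg_nat_mul d two_pos)
  have hbase (w : ℕ) : 1 ≤ 2 * ((w : ℝ) + 1) - 1 := by linarith [w.cast_nonneg (α := ℝ)]
  refine (hpoly.mul_left (3 ^ d * exp 2)).of_nonneg_of_le (fun w => ?_) (fun w => ?_)
  · have : (2 * ((w : ℝ) + 1) - 1) ^ d ≤ (2 * ((w : ℝ) + 1) + 1) ^ d :=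
      pow_le_pow_left₀ (by linarith [hbase w]) (by linarith) d
    exact mul_nonneg (sub_nonneg.2 this) (exp_nonneg _)
  · calc _ ≤ (3 * ((w : ℝ) + 1)) ^ d * exp (-2 * (w : ℝ)) := by
          refine mul_le_mul ?_ (exp_le_exp.2 ?_) (exp_nonneg _) (by positivity)
          · exact (sub_le_self _ (pow_nonneg (by linarith [hbase w]) d)).trans
              (pow_le_pow_left₀ (by positivity) (by linarith) d)
          · linarith [self_le_rpow_of_one_le (hbase w) hq]
      _ = 3 ^ d * exp 2 * (((w : ℝ) + 1) ^ d * exp (-2 * ((w : ℝ) + 1))) := by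
          rw [mul_pow, mul_mul_mul_comm, ← exp_add]
          ring_nf

lemma hasSum_cdqWeight {q : ℝ} (hq : 1 ≤ q) :
    HasSum (cdqWeight (ι := ι) q) (Cdq (Fintype.card ι) q) := by
  have hterms : Summable fun n : ℕ => ∑ k ∈ box n, cdqWeight (ι := ι) q k :=
    (summable_nat_add_iff 1).1 <| by
      simpa only [sum_box_succ_cdqWeight] using summable_cdq_term (Fintype.card ι) hq
  convert hasSum_sum_box (cdqWeight_nonneg q) hterms using 1
  rw [hterms.tsum_eq_zero_add, box_zero, sum_singleton, cdqWeight, if_pos rfl, zero_add, Cdq]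
  simp only [sum_box_succ_cdqWeight]

end LatticeBoxes

lemma abs_apply_le_pnorm {d : ℕ} {p : ℝ≥0∞} (hp : 1 ≤ p) (x : Fin d → ℝ) (i : Fin d) :
    |x i| ≤ pnorm d p x := by
  have : Fact (1 ≤ p) := ⟨hp⟩
  simpa [pnorm, Real.norm_eq_abs] using PiLp.norm_apply_le ((WithLp.equiv p (Fin d → ℝ)).symm x) i

lemma mul_two_mul_abs_sub_one_le_abs_add {y a m : ℝ} (hy : |y| ≤ a) (ha : 0 ≤ a) :
    a * (2 * |m| - 1) ≤ |y + 2 * a * m| := by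
  have h := abs_add' (2 * a * m) y
  rw [abs_mul, abs_mul, abs_two, abs_of_nonneg ha] at h
  linarith

lemma exp_neg_mul_le_exp_neg_mul_exp {s t : ℝ} (hs : 1 ≤ s) (ht : 1 ≤ t) :
    exp (-(s * t)) ≤ exp (-s) * exp (-(t - 1)) := by
  rw [← exp_add]
  exact exp_le_exp.2 (by nlinarith)

lemma one_le_mul_rpow_of_rpow_neg_inv_le {β q a : ℝ} (hβ : 0 < β) (hq : 0 < q)
    (ha : β ^ (-1 / q) ≤ a) : 1 ≤ β * a ^ q := by
  have h := rpow_le_rpow (rpow_nonneg hβ.le _) ha hq.le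
  rw [← rpow_mul hβ.le, div_mul_cancel₀ _ hq.ne', rpow_neg_one] at h
  exact (inv_le_iff_one_le_mul₀' hβ).1 h

lemma abs_sub_tsum_le_of_hasSum {β : Type*} {T G : β → ℝ} {S : ℝ} (b : β) (hG : HasSum G S)
    (hGb : 0 ≤ G b) (hT : ∀ k, k ≠ b → |T k| ≤ G k) : |T b - ∑' k, T k| ≤ S := by
  classical
  have hTs : Summable T := Summable.of_norm_bounded_eventually (f := T) hG.summable <|
    Filter.eventually_cofinite.2 <| (Set.finite_singleton b).subset fun k hk => by
      by_contra h; exact hk (hT k h)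
  rw [hTs.tsum_eq_add_tsum_ite b, sub_add_cancel_left, abs_neg, ← Real.norm_eq_abs]
  refine tsum_of_norm_bounded hG fun k => ?_
  split_ifs with h
  · simpa [h] using hGb
  · exact hT k h

lemma setIntegral_sq_abs_le {α : Type*} [MeasurableSpace α] {μ : Measure α} {s : Set α}
    (hs : μ s < ∞) {g : α → ℝ} {M : ℝ} (hg : ∀ x ∈ s, |g x| ≤ M) :
    ∫ x in s, |g x| ^ 2 ∂μ ≤ M ^ 2 * μ.real s := by
  refine (Real.le_norm_self _).trans <| norm_setIntegral_le_of_norm_le_const hs fun x hx => ?_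
  rw [Real.norm_eq_abs, abs_of_nonneg (by positivity)]
  exact pow_le_pow_left₀ (abs_nonneg _) (hg x hx) 2

lemma volume_real_Icc_const (d : ℕ) {a : ℝ} (ha : 0 ≤ a) :
    volume.real (Set.Icc (fun _ => -a : Fin d → ℝ) (fun _ => a)) = (2 * a) ^ d := by
  rw [Measure.real, volume_Icc_pi_toReal fun _ => by linarith]
  simp [two_mul]

section Periodization

variable {d : ℕ} {p : ℝ≥0∞} {β q C a : ℝ} {f : (Fin d → ℝ) → ℝ}

lemma abs_apply_add_smul_le_cdqWeight (hp : 1 ≤ p) (hq : 0 ≤ q) (hC : 0 ≤ C) (ha : 0 ≤ a)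
    (hβa : 1 ≤ β * a ^ q) (hf : ∀ x, |f x| ≤ C * exp (-β * pnorm d p x ^ q))
    {x : Fin d → ℝ} (hx : x ∈ Set.Icc (fun _ => -a) (fun _ => a)) {k : Fin d → ℤ} (hk : k ≠ 0) :
    |f (x + (2 * a) • fun i => (k i : ℝ))| ≤ C * exp (-(β * a ^ q)) * cdqWeight q k := by
  obtain ⟨i, hi⟩ := exists_natAbs_eq_supNatAbs hk
  set y := x + (2 * a) • fun i => (k i : ℝ)
  set n := supNatAbs k
  have hn : (1 : ℝ) ≤ n := by exact_mod_cast Nat.one_le_iff_ne_zero.2 (supNatAbs_eq_zero.not.2 hk)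
  have hy : a * (2 * n - 1) ≤ pnorm d p y := calc
    a * (2 * n - 1) = a * (2 * |(k i : ℝ)| - 1) := by rw [← hi, Nat.cast_natAbs, Int.cast_abs]
    _ ≤ |x i + 2 * a * k i| := mul_two_mul_abs_sub_one_le_abs_add (abs_le.2 ⟨hx.1 i, hx.2 i⟩) ha
    _ = |y i| := by simp [y]
    _ ≤ pnorm d p y := abs_apply_le_pnorm hp y i
  have hβ : 0 ≤ β := by nlinarith [rpow_nonneg ha q]
  have hyq : β * a ^ q * (2 * n - 1) ^ q ≤ β * pnorm d p y ^ q := by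
    rw [mul_assoc, ← mul_rpow ha (by linarith)]
    exact mul_le_mul_of_nonneg_left (rpow_le_rpow (by nlinarith) hy hq) hβ
  calc |f y| ≤ C * exp (-β * pnorm d p y ^ q) := hf y
    _ ≤ C * exp (-(β * a ^ q * (2 * n - 1) ^ q)) := by gcongr; linarith
    _ ≤ C * (exp (-(β * a ^ q)) * exp (-((2 * n - 1) ^ q - 1))) :=
        mul_le_mul_of_nonneg_left (exp_neg_mul_le_exp_neg_mul_exp hβa
          (one_le_rpow (by linarith) hq)) hC
    _ = C * exp (-(β * a ^ q)) * cdqWeight q k := by rw [cdqWeight, if_neg hk, mul_assoc]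

lemma abs_sub_tsum_add_smul_le (hp : 1 ≤ p) (hq : 1 ≤ q) (hC : 0 ≤ C) (ha : 0 ≤ a)
    (hβa : 1 ≤ β * a ^ q) (hf : ∀ x, |f x| ≤ C * exp (-β * pnorm d p x ^ q))
    {x : Fin d → ℝ} (hx : x ∈ Set.Icc (fun _ => -a) (fun _ => a)) :
    |f x - ∑' k : Fin d → ℤ, f (x + (2 * a) • fun i => (k i : ℝ))| ≤
      C * exp (-(β * a ^ q)) * Cdq d q := by
  have hG := (hasSum_cdqWeight (ι := Fin d) hq).mul_left (C * exp (-(β * a ^ q)))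
  rw [Fintype.card_fin] at hG
  simpa [← Pi.zero_def] using abs_sub_tsum_le_of_hasSum 0 hG (by simp [cdqWeight]) fun k hk =>
    abs_apply_add_smul_le_cdqWeight hp (by linarith) hC ha hβa hf hx hk

end Periodization

/-- If `|f(x)| ≤ C exp(−β‖x‖_p^q)` and `f̃(x) = ∑_{k ∈ ℤ^d} f(x + 2a k)`,
then for any `a ≥ β^{−1/q}`,
`∫_{[−a,a]^d} |f − f̃|² ≤ C_{d,q}² C² (2a)^d exp(−2βa^q)`. -/
theorem stmt7 (d : ℕ) (β q : ℝ) (hβ : 0 < β) (hq : 1 ≤ q) (p : ℝ≥0∞) (hp : 1 ≤ p)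
    (f : (Fin d → ℝ) → ℝ) (C : ℝ)
    (hf : ∀ x : Fin d → ℝ, |f x| ≤ C * Real.exp (-β * pnorm d p x ^ q))
    (a : ℝ) (ha : β ^ (-1 / q) ≤ a) :
    ∫ x in Set.Icc (fun _ => -a : Fin d → ℝ) (fun _ => a),
        |f x - ∑' k : Fin d → ℤ, f (x + (2 * a) • (fun i => (k i : ℝ)))| ^ 2 ≤
      Cdq d q ^ 2 * C ^ 2 * (2 * a) ^ d * Real.exp (-2 * β * a ^ q) := by
  have ha0 : 0 ≤ a := (rpow_nonneg hβ.le _).trans ha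
  have hC : 0 ≤ C := (mul_nonneg_iff_of_pos_right (exp_pos _)).1 ((abs_nonneg _).trans (hf 0))
  have hβa := one_le_mul_rpow_of_rpow_neg_inv_le hβ (by linarith) ha
  calc _ ≤ (C * exp (-(β * a ^ q)) * Cdq d q) ^ 2 *
        volume.real (Set.Icc (fun _ => -a : Fin d → ℝ) (fun _ => a)) :=
        setIntegral_sq_abs_le isCompact_Icc.measure_lt_top fun x hx =>
          abs_sub_tsum_add_smul_le hp hq hC ha0 hβa hf hx
    _ = _ := by
        rw [volume_real_Icc_const d ha0, show exp (-2 * β * a ^ q) = exp (-(β * a ^ q)) ^ 2 by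
          rw [← exp_nat_mul]; ring_nf]
        ring
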